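/- For the modified game, strong duality holds: sup{ xᵀA' y : x, y ∈ Δ₂, xᵀB y ≤ 1/2 } = 7/2 = inf_{λ ≥ 0} sup_{x, y ∈ Δ₂} [ xᵀA' y + λ(1/2 − xᵀB y) ]. -/
import Mathlib


/-- The probability simplex in ℝ². -/
def simplex2 : Set (ℝ × ℝ) := {x | 0 ≤ x.1 ∧ 0 ≤ x.2 ∧ x.1 + x.2 = 1}

/-- Payoff `xᵀ A' y` for the modified matrix `A' = [[3,3],[3,4]]`. -/
def pay' (x y : ℝ × ℝ) : ℝ := 3 * x.1 * y.1 + 3 * x.1 * y.2 + 3 * x.2 * y.1 + 4 * x.2 * y.2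

/-- Constraint value `xᵀ B y` for `B = [[0,0],[0,1]]`. -/
def con (x y : ℝ × ℝ) : ℝ := x.2 * y.2

lemma primal_bound : ∀ v ∈ {v : ℝ | ∃ x y : ℝ × ℝ, x ∈ simplex2 ∧ y ∈ simplex2 ∧
        con x y ≤ 1 / 2 ∧ v = pay' x y}, v ≤ 7 / 2 := by
  rintro v ⟨x, y, ⟨hx1, hx2, hx3⟩, ⟨hy1, hy2, hy3⟩, hc, rfl⟩
  simp only [pay', con] at *
  nlinarith [mul_nonneg hx1 hy1, mul_nonneg hx1 hy2, mul_nonneg hx2 hy1]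

lemma primal_mem : (7 : ℝ) / 2 ∈ {v : ℝ | ∃ x y : ℝ × ℝ, x ∈ simplex2 ∧ y ∈ simplex2 ∧
        con x y ≤ 1 / 2 ∧ v = pay' x y} := by
  refine ⟨(0, 1), (1/2, 1/2), ?_, ?_, ?_, ?_⟩ <;> norm_num [simplex2, con, pay']

lemma dual_set_one : {w : ℝ | ∃ x y : ℝ × ℝ, x ∈ simplex2 ∧ y ∈ simplex2 ∧
            w = pay' x y + 1 * (1 / 2 - con x y)} = {(7:ℝ)/2} := by
  ext w
  constructor
  · rintro ⟨x, y, ⟨hx1, hx2, hx3⟩, ⟨hy1, hy2, hy3⟩, rfl⟩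
    simp only [pay', con, Set.mem_singleton_iff]
    nlinarith
  · rintro rfl
    exact ⟨(1, 0), (1, 0), by norm_num [simplex2], by norm_num [simplex2],
      by norm_num [pay', con]⟩

lemma inner_bound (lam : ℝ) (hlam : 0 ≤ lam) :
    ∀ w ∈ {w : ℝ | ∃ x y : ℝ × ℝ, x ∈ simplex2 ∧ y ∈ simplex2 ∧
            w = pay' x y + lam * (1 / 2 - con x y)}, w ≤ 4 + lam / 2 := by
  rintro w ⟨x, y, ⟨hx1, hx2, hx3⟩, ⟨hy1, hy2, hy3⟩, rfl⟩
  simp only [pay', con]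
  nlinarith [mul_nonneg hx1 hy1, mul_nonneg hx1 hy2, mul_nonneg hx2 hy1,
    mul_nonneg hlam (mul_nonneg hx2 hy2)]

lemma dual_lb : ∀ v ∈ {v : ℝ | ∃ lam : ℝ, 0 ≤ lam ∧
        v = sSup {w : ℝ | ∃ x y : ℝ × ℝ, x ∈ simplex2 ∧ y ∈ simplex2 ∧
            w = pay' x y + lam * (1 / 2 - con x y)}}, 7 / 2 ≤ v := by
  rintro v ⟨lam, hlam, rfl⟩
  have hbdd : BddAbove {w : ℝ | ∃ x y : ℝ × ℝ, x ∈ simplex2 ∧ y ∈ simplex2 ∧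
      w = pay' x y + lam * (1 / 2 - con x y)} := ⟨4 + lam / 2, inner_bound lam hlam⟩
  rcases le_total lam 1 with h | h
  · have hmem : 4 + lam * (1/2 - 1) ∈ {w : ℝ | ∃ x y : ℝ × ℝ, x ∈ simplex2 ∧ y ∈ simplex2 ∧
        w = pay' x y + lam * (1 / 2 - con x y)} :=
      ⟨(0, 1), (0, 1), by norm_num [simplex2], by norm_num [simplex2],
        by norm_num [pay', con]⟩
    have := le_csSup hbdd hmem
    linarith
  · have hmem : 3 + lam * (1/2 - 0) ∈ {w : ℝ | ∃ x y : ℝ × ℝ, x ∈ simplex2 ∧ y ∈ simplex2 ∧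
        w = pay' x y + lam * (1 / 2 - con x y)} :=
      ⟨(1, 0), (1, 0), by norm_num [simplex2], by norm_num [simplex2],
        by norm_num [pay', con]⟩
    have := le_csSup hbdd hmem
    linarith

/-- For the modified game strong duality holds: the primal and dual values are
both equal to `7/2`. -/
theorem strong_duality_holds_modified_game :
    sSup {v : ℝ | ∃ x y : ℝ × ℝ, x ∈ simplex2 ∧ y ∈ simplex2 ∧
        con x y ≤ 1 / 2 ∧ v = pay' x y} = 7 / 2 ∧
    sInf {v : ℝ | ∃ lam : ℝ, 0 ≤ lam ∧
        v = sSup {w : ℝ | ∃ x y : ℝ × ℝ, x ∈ simplex2 ∧ y ∈ simplex2 ∧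
            w = pay' x y + lam * (1 / 2 - con x y)}} = 7 / 2 := by
  constructor
  · exact le_antisymm (csSup_le ⟨7/2, primal_mem⟩ primal_bound)
      (le_csSup ⟨7/2, primal_bound⟩ primal_mem)
  · have hmem : (7:ℝ)/2 ∈ {v : ℝ | ∃ lam : ℝ, 0 ≤ lam ∧
        v = sSup {w : ℝ | ∃ x y : ℝ × ℝ, x ∈ simplex2 ∧ y ∈ simplex2 ∧
            w = pay' x y + lam * (1 / 2 - con x y)}} := by
      refine ⟨1, zero_le_one, ?_⟩
      rw [dual_set_one, csSup_singleton]
    exact le_antisymm (csInf_le ⟨7/2, dual_lb⟩ hmem) (le_csInf ⟨7/2, hmem⟩ dual_lb)
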